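/- Let I ⊆ ℝ be an open interval and fix θ₀ ∈ I. Let V ⊆ ℂ∖{0} be open with a holomorphic function L : V → ℂ satisfying exp(L(w)) = i·w on V and Im L bounded on V. For each θ ∈ I suppose 1 + 2cos(θ)·w·L(w) − w² ≠ 0 on V, set G_θ(w) = 2i·w/(1 + 2cos(θ)·w·L(w) − w²), and let F_θ : U → V be holomorphic on an open set U ⊆ ℂ∖{0} having 0 as a limit point, with G_θ(F_θ(z)) = z for all z ∈ U and F_θ(z) → 0 as z → 0 along U. Assume that for each z ∈ U the map θ ↦ F_θ(z) is differentiable at θ₀, with derivative ∂_θF_θ(z)|_{θ=θ₀}. Then, as z → 0 along U, ∂_θF_θ(z)|_{θ=θ₀} = (1/2)·sin(θ₀)·z²·Log(z) + O(z²), where Log is the principal complex logarithm. -/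

import Mathlib

/-!
Write `w = 𝔣_θ z` and `D = 1 + 2 cos θ · w L(w) - w²`, so that `z D = 2i w`. Differentiating this
in `θ` and using `w L'(w) = 1` gives `∂_θ𝔣 · A = -2 sin θ₀ · w² L(w)` with
`A = 1 - 2 cos θ₀ · w + w²`.
Since `z² D² = -4 w²`, the error term is `(1/2) sin θ₀ · z² · (D² L(w) - A Log z) / A`.
As `Re L(w) = log ‖w‖` and `Im L` is bounded, `L(w) = O(log ‖w‖)`, so `w L(w)` and `w L(w)²` tend
to `0`; hence `D, A → 1`, and `L(w) - Log z`, whose real part is `log ‖D‖ - log 2`, stays bounded.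
So the quotient is `O(1)`.
-/

open Complex Filter Topology Asymptotics

theorem Real.tendsto_mul_abs_log_pow_nhdsGT_zero (n : ℕ) :
    Tendsto (fun x : ℝ => x * |Real.log x| ^ n) (𝓝[>] 0) (𝓝 0) := by
  refine (isLittleO_abs_log_rpow_rpow_nhdsGT_zero (n : ℝ) (s := -1) (by norm_num)
    ).tendsto_div_nhds_zero.congr' ?_
  filter_upwards [self_mem_nhdsWithin] with x (hx : 0 < x)
  rw [Real.rpow_natCast, Real.rpow_neg_one, div_inv_eq_mul, mul_comm]

theorem Complex.re_eq_log_norm_of_exp_eq {ζ c w : ℂ} (hc : ‖c‖ = 1) (h : exp ζ = c * w) :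
    ζ.re = Real.log ‖w‖ := by
  rw [← Real.log_exp ζ.re, ← Complex.norm_exp, h, norm_mul, hc, one_mul]

theorem Complex.isBigO_one_of_re_im {α : Type*} {l : Filter α} {f : α → ℂ}
    (hre : (fun x => (f x).re) =O[l] (fun _ => (1 : ℝ)))
    (him : (fun x => (f x).im) =O[l] (fun _ => (1 : ℝ))) :
    f =O[l] (fun _ => (1 : ℂ)) := by
  rw [isBigO_one_iff] at hre him ⊢
  exact (isBoundedUnder_le_add hre him).mono_le
    (Eventually.of_forall fun x => norm_le_abs_re_add_abs_im (f x))

theorem Asymptotics.IsBigO.exists_pos_bound_nhdsWithin {E F G : Type*} [NormedAddCommGroup E]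
    [Norm F] [SeminormedAddCommGroup G] {f : E → F} {g : E → G} {U : Set E}
    (h : f =O[𝓝[U] 0] g) :
    ∃ C > (0 : ℝ), ∃ δ > (0 : ℝ), ∀ z ∈ U, ‖z‖ < δ → ‖f z‖ ≤ C * ‖g z‖ := by
  obtain ⟨C, hC, hfg⟩ := h.exists_pos
  obtain ⟨δ, hδ, hball⟩ := Metric.mem_nhdsWithin_iff.1 hfg.bound
  exact ⟨C, hC, δ, hδ, fun z hz hzδ => hball ⟨mem_ball_zero_iff.2 hzδ, hz⟩⟩

theorem hasDerivAt_inv_of_exp_eq_mul {L : ℂ → ℂ} {c w : ℂ} (hL : DifferentiableAt ℂ L w)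
    (h : ∀ᶠ v in 𝓝 w, exp (L v) = c * v) : HasDerivAt L w⁻¹ w := by
  have hcw : c * w ≠ 0 := h.self_of_nhds ▸ exp_ne_zero _
  have hexp : HasDerivAt (fun v => exp (L v)) (c * w * deriv L w) w := by
    simpa only [h.self_of_nhds] using hL.hasDerivAt.cexp
  have hlin : HasDerivAt (fun v => exp (L v)) c w :=
    ((hasDerivAt_id w).const_mul c).congr_deriv (mul_one c) |>.congr_of_eventuallyEq h
  have hwL : w * deriv L w = 1 :=
    mul_left_cancel₀ (left_ne_zero_of_mul hcw) (by rw [← mul_assoc, hexp.unique hlin, mul_one])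
  exact eq_inv_of_mul_eq_one_right hwL ▸ hL.hasDerivAt

/-- With `c = cos θ`, `geodesicPairDenom L c` is the denominator of `G_θ`, and
`geodesicPairCoeff c` is the factor of `∂_θ 𝔣_θ` in the derivative of `G_θ(𝔣_θ z) = z`. -/
def geodesicPairDenom (L : ℂ → ℂ) (c w : ℂ) : ℂ := 1 + 2 * c * w * L w - w ^ 2

def geodesicPairCoeff (c w : ℂ) : ℂ := 1 - 2 * c * w + w ^ 2

theorem mul_geodesicPairCoeff_eq_of_hasDerivAt {L : ℂ → ℂ} {g : ℝ → ℂ} {d z : ℂ} {θ₀ : ℝ}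
    (hL : HasDerivAt L (g θ₀)⁻¹ (g θ₀)) (hg0 : g θ₀ ≠ 0) (hg : HasDerivAt g d θ₀)
    (hz : ∀ᶠ θ in 𝓝 θ₀, z * geodesicPairDenom L (Real.cos θ) (g θ) = 2 * I * g θ) :
    d * geodesicPairCoeff (Real.cos θ₀) (g θ₀) = -2 * Real.sin θ₀ * g θ₀ ^ 2 * L (g θ₀) := by
  have hcos : HasDerivAt (fun θ : ℝ => (Real.cos θ : ℂ)) (-Real.sin θ₀ : ℝ) θ₀ :=
    (Real.hasDerivAt_cos θ₀).ofReal_comp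
  have hD := ((((hcos.const_mul 2).mul hg).mul (hL.comp θ₀ hg)).const_add 1).sub (hg.pow 2)
  have hzero := ((hD.const_mul z).sub (hg.const_mul (2 * I))).unique
    ((hasDerivAt_const θ₀ (0 : ℂ)).congr_of_eventuallyEq (hz.mono fun θ hθ => sub_eq_zero.2 hθ))
  have hz₀ : z * geodesicPairDenom L (Real.cos θ₀) (g θ₀) = 2 * I * g θ₀ := hz.self_of_nhds
  have hz0 : z ≠ 0 := by rintro rfl; simp [hg0] at hz₀
  apply mul_left_cancel₀ hz0
  simp only [Pi.mul_apply, Function.comp_apply, ofReal_neg, Nat.cast_ofNat, pow_one,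
    Nat.add_one_sub_one] at hzero
  unfold geodesicPairDenom at hz₀
  unfold geodesicPairCoeff
  linear_combination -(g θ₀) * hzero + d * hz₀ +
    (2 * z * Real.cos θ₀ * d * g θ₀) * mul_inv_cancel₀ hg0

theorem geodesicPair_error_eq {d s z w ℓ μ D A : ℂ} (hA : A ≠ 0)
    (hdA : d * A = -2 * s * w ^ 2 * ℓ) (hzD : z * D = 2 * I * w) :
    1 / 2 * s * (z ^ 2 * ((D ^ 2 * ℓ - A * μ) / A)) = d - 1 / 2 * s * z ^ 2 * μ := by
  field_simp
  linear_combination (-2) * hdA + s * ℓ * (z * D + 2 * I * w) * hzD + 4 * s * ℓ * w ^ 2 * I_sq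

section LogBranch

variable {V : Set ℂ} {L : ℂ → ℂ}

theorem ne_zero_of_exp_eq (hexp : ∀ w ∈ V, exp (L w) = I * w) {w : ℂ} (hw : w ∈ V) :
    w ≠ 0 := fun h0 => exp_ne_zero (L w) (by rw [hexp w hw, h0, mul_zero])

theorem nhdsWithin_le_nhdsNE_of_exp_eq (hexp : ∀ w ∈ V, exp (L w) = I * w) :
    𝓝[V] (0 : ℂ) ≤ 𝓝[≠] 0 :=
  nhdsWithin_mono _ fun _ hw => ne_zero_of_exp_eq hexp hw

theorem isBigO_log_norm_of_exp_eq {M : ℝ} (hexp : ∀ w ∈ V, exp (L w) = I * w)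
    (him : ∀ w ∈ V, |(L w).im| ≤ M) :
    L =O[𝓝[V] 0] (fun w => Real.log ‖w‖) := by
  have hlog : Tendsto (fun w : ℂ => ‖Real.log ‖w‖‖) (𝓝[V] 0) atTop :=
    (tendsto_abs_atBot_atTop.comp (Real.tendsto_log_nhdsGT_zero.comp tendsto_norm_nhdsNE_zero)
      ).mono_left (nhdsWithin_le_nhdsNE_of_exp_eq hexp)
  have hre : (fun w => ((L w).re : ℂ)) =O[𝓝[V] 0] (fun w => Real.log ‖w‖) :=
    IsBigO.of_bound' <| eventually_mem_nhdsWithin.mono fun w hw => by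
      rw [norm_real, re_eq_log_norm_of_exp_eq norm_I (hexp w hw)]
  have hbdd : (fun w => ((L w).im : ℂ) * I) =O[𝓝[V] 0] (fun _ => (1 : ℝ)) :=
    IsBigO.of_bound M <| eventually_mem_nhdsWithin.mono fun w hw => by simpa using him w hw
  have hone : (fun _ => (1 : ℝ)) =o[𝓝[V] 0] (fun w : ℂ => Real.log ‖w‖) :=
    isLittleO_const_left.2 (Or.inr hlog)
  simpa only [re_add_im] using hre.add (hbdd.trans_isLittleO hone).isBigO

theorem tendsto_mul_pow_of_exp_eq {M : ℝ} (hexp : ∀ w ∈ V, exp (L w) = I * w)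
    (him : ∀ w ∈ V, |(L w).im| ≤ M) (n : ℕ) :
    Tendsto (fun w => w * L w ^ n) (𝓝[V] 0) (𝓝 0) := by
  have hbig : (fun w => w * L w ^ n) =O[𝓝[V] 0] (fun w => ‖w‖ * |Real.log ‖w‖| ^ n) :=
    (isBigO_norm_right.2 (isBigO_refl _ _)).mul
      ((isBigO_abs_right.2 (isBigO_log_norm_of_exp_eq hexp him)).pow n)
  exact hbig.trans_tendsto <| (Real.tendsto_mul_abs_log_pow_nhdsGT_zero n).comp <|
    tendsto_norm_nhdsNE_zero.mono_left (nhdsWithin_le_nhdsNE_of_exp_eq hexp)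

theorem tendsto_geodesicPairDenom {M : ℝ} (hexp : ∀ w ∈ V, exp (L w) = I * w)
    (him : ∀ w ∈ V, |(L w).im| ≤ M) (c : ℂ) :
    Tendsto (geodesicPairDenom L c) (𝓝[V] 0) (𝓝 1) := by
  have hw : Tendsto (fun w : ℂ => w) (𝓝[V] 0) (𝓝 0) :=
    tendsto_nhdsWithin_of_tendsto_nhds tendsto_id
  have h := ((tendsto_mul_pow_of_exp_eq hexp him 1).const_mul (2 * c)).const_add 1
    |>.sub (hw.mul hw)
  simp only [mul_zero, add_zero, sub_zero, pow_one] at h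
  refine h.congr fun w => ?_
  unfold geodesicPairDenom
  ring

theorem tendsto_geodesicPairCoeff (c : ℂ) : Tendsto (geodesicPairCoeff c) (𝓝 0) (𝓝 1) := by
  have h : Continuous (geodesicPairCoeff c) := by unfold geodesicPairCoeff; fun_prop
  simpa [geodesicPairCoeff] using h.tendsto 0

theorem isBigO_one_sub_log_of_exp_eq {M : ℝ} (hexp : ∀ w ∈ V, exp (L w) = I * w)
    (him : ∀ w ∈ V, |(L w).im| ≤ M) (c : ℂ) :
    (fun w => L w - log (2 * I * w / geodesicPairDenom L c w)) =O[𝓝[V] 0]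
      (fun _ => (1 : ℂ)) := by
  have hD := tendsto_geodesicPairDenom hexp him c
  have hlogD : Tendsto (fun w => Real.log ‖geodesicPairDenom L c w‖ - Real.log 2) (𝓝[V] 0)
      (𝓝 (Real.log ‖(1 : ℂ)‖ - Real.log 2)) :=
    ((Real.continuousAt_log (by simp)).tendsto.comp hD.norm).sub_const _
  refine isBigO_one_of_re_im ((isBigO_const_of_tendsto hlogD one_ne_zero).congr' ?_ .rfl) ?_
  · filter_upwards [eventually_mem_nhdsWithin, hD.eventually_ne one_ne_zero] with w hw hD0
    have hw0 : ‖w‖ ≠ 0 := norm_ne_zero_iff.2 (ne_zero_of_exp_eq hexp hw)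
    simp only [sub_re, log_re, re_eq_log_norm_of_exp_eq norm_I (hexp w hw), norm_div, norm_mul,
      norm_I, RCLike.norm_ofNat, mul_one]
    rw [Real.log_div (mul_ne_zero two_ne_zero hw0) (norm_ne_zero_iff.2 hD0),
      Real.log_mul two_ne_zero hw0]
    ring
  · refine IsBigO.of_bound (M + Real.pi) <| eventually_mem_nhdsWithin.mono fun w hw => ?_
    rw [sub_im, log_im, Real.norm_eq_abs, norm_one, mul_one]
    exact (abs_sub _ _).trans (add_le_add (him w hw) (abs_arg_le_pi _))

theorem isBigO_one_geodesicPair_remainder {M : ℝ} (hexp : ∀ w ∈ V, exp (L w) = I * w)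
    (him : ∀ w ∈ V, |(L w).im| ≤ M) (c : ℂ) :
    (fun w => (geodesicPairDenom L c w ^ 2 * L w -
        geodesicPairCoeff c w * log (2 * I * w / geodesicPairDenom L c w)) /
          geodesicPairCoeff c w) =O[𝓝[V] 0] (fun _ => (1 : ℂ)) := by
  have hA := (tendsto_geodesicPairCoeff c).mono_left (nhdsWithin_le_nhds (s := V))
  have hD := tendsto_geodesicPairDenom hexp him c
  have hw : Tendsto (fun w : ℂ => w) (𝓝[V] 0) (𝓝 0) :=
    tendsto_nhdsWithin_of_tendsto_nhds tendsto_id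
  have hwL := tendsto_mul_pow_of_exp_eq hexp him 1
  have hwL2 := tendsto_mul_pow_of_exp_eq hexp him 2
  -- `(D² - A) L`, written through the quantities `w L` and `w L²` that tend to `0`
  have hsmall : Tendsto (fun w => (geodesicPairDenom L c w + 1) *
      (2 * c * (w * L w ^ 2) - w * (w * L w ^ 1)) + 2 * c * (w * L w ^ 1) - w * (w * L w ^ 1))
      (𝓝[V] 0) (𝓝 0) := by
    simpa using ((hD.add_const 1).mul ((hwL2.const_mul (2 * c)).sub (hw.mul hwL))).add
      (hwL.const_mul (2 * c)) |>.sub (hw.mul hwL)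
  refine ((isBigO_const_of_tendsto (hsmall.div hA one_ne_zero) one_ne_zero).add
    (isBigO_one_sub_log_of_exp_eq hexp him c)).congr' ?_ .rfl
  filter_upwards [hA.eventually_ne one_ne_zero] with w hA0
  simp only [Pi.div_apply]
  field_simp
  unfold geodesicPairDenom geodesicPairCoeff
  ring

end LogBranch

theorem geodesic_pair_theta_derivative_asymptotics_general
    (a b θ₀ : ℝ) (hθ₀ : θ₀ ∈ Set.Ioo a b)
    (V : Set ℂ) (hVopen : IsOpen V)
    (L : ℂ → ℂ) (hLhol : DifferentiableOn ℂ L V)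
    (hLexp : ∀ w ∈ V, Complex.exp (L w) = Complex.I * w)
    (hLbd : ∃ M : ℝ, ∀ w ∈ V, |(L w).im| ≤ M)
    (U : Set ℂ)
    (F : ℝ → ℂ → ℂ)
    (hden : ∀ θ ∈ Set.Ioo a b, ∀ w ∈ V,
      1 + 2 * (Real.cos θ : ℂ) * w * L w - w ^ 2 ≠ 0)
    (hFV : ∀ θ ∈ Set.Ioo a b, ∀ z ∈ U, F θ z ∈ V)
    (hGF : ∀ θ ∈ Set.Ioo a b, ∀ z ∈ U,
      2 * Complex.I * F θ z /
        (1 + 2 * (Real.cos θ : ℂ) * F θ z * L (F θ z) - (F θ z) ^ 2) = z)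
    (hFlim : ∀ θ ∈ Set.Ioo a b, Tendsto (F θ) (nhdsWithin 0 U) (nhds 0))
    (Fd : ℂ → ℂ)
    (hFd : ∀ z ∈ U, HasDerivAt (fun θ : ℝ => F θ z) (Fd z) θ₀) :
    ∃ C > (0 : ℝ), ∃ δ > (0 : ℝ), ∀ z ∈ U, ‖z‖ < δ →
      ‖Fd z - (1 / 2 : ℂ) * (Real.sin θ₀ : ℂ) * z ^ 2 * Complex.log z‖
        ≤ C * ‖z‖ ^ 2 := by
  obtain ⟨M, hM⟩ := hLbd
  have hw : Tendsto (F θ₀) (𝓝[U] 0) (𝓝[V] 0) :=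
    tendsto_nhdsWithin_iff.2 ⟨hFlim θ₀ hθ₀, eventually_mem_nhdsWithin.mono (hFV θ₀ hθ₀)⟩
  have hrel : ∀ θ ∈ Set.Ioo a b, ∀ z ∈ U,
      z * geodesicPairDenom L (Real.cos θ) (F θ z) = 2 * I * F θ z := fun θ hθ z hz =>
    ((div_eq_iff (hden θ hθ _ (hFV θ hθ z hz))).1 (hGF θ hθ z hz)).symm
  have hid (z : ℂ) (hz : z ∈ U) : Fd z * geodesicPairCoeff (Real.cos θ₀) (F θ₀ z) =
      -2 * Real.sin θ₀ * F θ₀ z ^ 2 * L (F θ₀ z) := by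
    have hwV := hFV θ₀ hθ₀ z hz
    refine mul_geodesicPairCoeff_eq_of_hasDerivAt (g := fun θ => F θ z) ?_
      (ne_zero_of_exp_eq hLexp hwV) (hFd z hz)
      (eventually_of_mem (isOpen_Ioo.mem_nhds hθ₀) fun θ hθ => hrel θ hθ z hz)
    exact hasDerivAt_inv_of_exp_eq_mul ((hLhol _ hwV).differentiableAt (hVopen.mem_nhds hwV))
      (eventually_of_mem (hVopen.mem_nhds hwV) hLexp)
  have hA := (tendsto_geodesicPairCoeff (Real.cos θ₀)).comp (hw.mono_right nhdsWithin_le_nhds)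
  have hR := ((isBigO_one_geodesicPair_remainder hLexp hM (Real.cos θ₀)).comp_tendsto hw)
  have hE : (fun z => Fd z - (1 / 2 : ℂ) * (Real.sin θ₀ : ℂ) * z ^ 2 * Complex.log z)
      =O[𝓝[U] 0] (fun z => z ^ 2) := by
    refine (((isBigO_refl (fun z : ℂ => z ^ 2) _).mul hR).const_mul_left
      ((1 / 2 : ℂ) * Real.sin θ₀)).congr' ?_ (.of_forall fun z => mul_one _)
    filter_upwards [eventually_mem_nhdsWithin, hA.eventually_ne one_ne_zero] with z hz hA0
    rw [Function.comp_apply] at hA0 ⊢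
    rw [show 2 * I * F θ₀ z / geodesicPairDenom L (Real.cos θ₀) (F θ₀ z) = z from hGF θ₀ hθ₀ z hz]
    exact geodesicPair_error_eq hA0 (hid z hz) (hrel θ₀ hθ₀ z hz)
  obtain ⟨C, hC, δ, hδ, hbound⟩ := hE.exists_pos_bound_nhdsWithin
  exact ⟨C, hC, δ, hδ, fun z hz hzδ => by simpa only [norm_pow] using hbound z hz hzδ⟩

/-- **`θ`-derivative asymptotics of the family `𝔣_θ` of geodesic-pair maps.** Let `L` be a
holomorphic branch of `log(i·w)` with bounded imaginary part on an open set `V ⊆ ℂ ∖ {0}`.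
For each `θ` in an open interval `I = (a, b)` suppose `1 + 2 cos θ · w L(w) − w² ≠ 0` on
`V`, and let `F θ : U → V` be a holomorphic right inverse of
`G_θ(w) = 2i w/(1 + 2 cos θ · w L(w) − w²)` on an open set `U ⊆ ℂ ∖ {0}` having `0` as a
limit point, with `F θ z → 0` as `z → 0` along `U`. If for each `z ∈ U` the map
`θ ↦ F θ z` is differentiable at `θ₀ ∈ I` with derivative `Fd z`, then
`Fd z = (1/2) sin θ₀ · z² Log z + O(z²)` as `z → 0` along `U`. -/
theorem geodesic_pair_theta_derivative_asymptotics
    (a b θ₀ : ℝ) (hθ₀ : θ₀ ∈ Set.Ioo a b)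
    (V : Set ℂ) (hVopen : IsOpen V) (hV0 : (0 : ℂ) ∉ V)
    (L : ℂ → ℂ) (hLhol : DifferentiableOn ℂ L V)
    (hLexp : ∀ w ∈ V, Complex.exp (L w) = Complex.I * w)
    (hLbd : ∃ M : ℝ, ∀ w ∈ V, |(L w).im| ≤ M)
    (U : Set ℂ) (hUopen : IsOpen U) (hU0 : (0 : ℂ) ∉ U) (hacc : (0 : ℂ) ∈ closure U)
    (F : ℝ → ℂ → ℂ)
    (hden : ∀ θ ∈ Set.Ioo a b, ∀ w ∈ V,
      1 + 2 * (Real.cos θ : ℂ) * w * L w - w ^ 2 ≠ 0)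
    (hFhol : ∀ θ ∈ Set.Ioo a b, DifferentiableOn ℂ (F θ) U)
    (hFV : ∀ θ ∈ Set.Ioo a b, ∀ z ∈ U, F θ z ∈ V)
    (hGF : ∀ θ ∈ Set.Ioo a b, ∀ z ∈ U,
      2 * Complex.I * F θ z /
        (1 + 2 * (Real.cos θ : ℂ) * F θ z * L (F θ z) - (F θ z) ^ 2) = z)
    (hFlim : ∀ θ ∈ Set.Ioo a b, Tendsto (F θ) (nhdsWithin 0 U) (nhds 0))
    (Fd : ℂ → ℂ)
    (hFd : ∀ z ∈ U, HasDerivAt (fun θ : ℝ => F θ z) (Fd z) θ₀) :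
    ∃ C > (0 : ℝ), ∃ δ > (0 : ℝ), ∀ z ∈ U, ‖z‖ < δ →
      ‖Fd z - (1 / 2 : ℂ) * (Real.sin θ₀ : ℂ) * z ^ 2 * Complex.log z‖
        ≤ C * ‖z‖ ^ 2 :=
  geodesic_pair_theta_derivative_asymptotics_general a b θ₀ hθ₀ V hVopen L hLhol hLexp hLbd U F hden
    hFV hGF hFlim Fd hFd
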